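/- arXiv:2110.09911 — 2 statements merged into one kernel-verified Lean document; each statement's English description precedes it below -/
import Mathlib

section
/- With F X = A × X + 1, G X = X^A × Bool, γ_X(Ū) = (a ↦ {x | (a,x) ∈ Ū}, decide(• ∈ Ū)), and ϑ_X : F 𝒫 X → 𝒫 F X the distributive law ϑ_X(a,U) = {a} × U, ϑ_X(•) = {•}, the natural transformation γ is compatible with ϑ and the powerset multiplication μ: for every set X, γ_X ∘ μ_{FX} ∘ 𝒫ϑ_X = G μ_X ∘ γ_{𝒫X} as functions 𝒫(F(𝒫 X)) → G(𝒫 X), i.e., γ_X(⋃{ϑ_X(w) | w ∈ W}) = Gμ_X(γ_{𝒫X}(W)) for all W ⊆ F(𝒫 X). -/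
attribute [local instance] Classical.propDecidable

/-- The distributive law `ϑ_X : F (𝒫 X) → 𝒫 (F X)` for `F X = A × X + 1`. -/
def theta {A X : Type} : A × Set X ⊕ Unit → Set (A × X ⊕ Unit)
  | Sum.inl (a, U) => Sum.inl '' ({a} ×ˢ U)
  | Sum.inr _ => {Sum.inr ()}

/-- `γ_X : 𝒫(A × X + 1) → (𝒫 X)^A × Bool`. -/
noncomputable def gammaNDA {A X : Type} (U : Set (A × X ⊕ Unit)) :
    (A → Set X) × Bool :=
  (fun a => {x | Sum.inl (a, x) ∈ U}, decide (Sum.inr () ∈ U))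

/-- `γ` is compatible with `ϑ` and the powerset multiplication `μ`:
`γ_X (⋃ {ϑ_X w | w ∈ W}) = G μ_X (γ_{𝒫X} W)` for all `W ⊆ F (𝒫 X)`. -/
theorem stmt7 {A X : Type} (W : Set (A × Set X ⊕ Unit)) :
    gammaNDA (⋃₀ ((theta (A := A) (X := X)) '' W)) =
      ((fun a => ⋃₀ ((gammaNDA W).1 a)), (gammaNDA W).2) := by
  unfold gammaNDA
  refine Prod.ext ?_ ?_
  · funext a
    ext x
    simp only [Set.mem_setOf_eq, Set.mem_sUnion, Set.mem_image]
    constructor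
    · rintro ⟨_, ⟨w, hw, rfl⟩, hx⟩
      rcases w with ⟨a', U⟩ | u
      · simp only [theta, Set.mem_image, Set.mem_prod, Set.mem_singleton_iff] at hx
        rcases hx with ⟨⟨a'', x'⟩, ⟨rfl, hU⟩, h⟩
        injection h with h'
        obtain ⟨rfl, rfl⟩ := Prod.mk.injEq .. ▸ (Prod.mk.inj h')
        exact ⟨U, hw, hU⟩
      · simp [theta] at hx
    · rintro ⟨U, hU, hx⟩
      exact ⟨theta (Sum.inl (a, U)), ⟨_, hU, rfl⟩, by simpa [theta] using hx⟩
  · simp only []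
    congr 1
    simp only [eq_iff_iff, Set.mem_sUnion, Set.mem_image]
    constructor
    · rintro ⟨_, ⟨w, hw, rfl⟩, hx⟩
      rcases w with ⟨a', U⟩ | u
      · simp [theta] at hx
      · exact hw
    · intro hw
      exact ⟨theta (Sum.inr ()), ⟨_, hw, rfl⟩, by simp [theta]⟩
end

section
/- Let (X, →, ↓) and (Y, →, ↓) be nondeterministic automata over A and let f ⊆ X × Y be a relation satisfying: (1) for all x, y', a: (∃ y, x f y ∧ y →_a y') ↔ (∃ x', x' f y' ∧ x →_a x'), and (2) for all x: x↓ ↔ ∃ y, x f y ∧ y↓. Then for all U, U' ⊆ X: U ≃_X U' ↔ f[U] ≃_Y f[U'], where f[U] = {y | ∃ x ∈ U, x f y} and ≃ denotes language equivalence of determinised state sets (U ≃ U' iff ∀ w ∈ A*, U_w↓ ↔ U'_w↓). -/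
/-- One-letter step of the determinised automaton. -/
def stepSet {A X : Type} (tr : X → A → X → Prop) (U : Set X) (a : A) : Set X :=
  {x' | ∃ x ∈ U, tr x a x'}

/-- Word-indexed step of the determinised automaton. -/
def stepWord {A X : Type} (tr : X → A → X → Prop) : Set X → List A → Set X
  | U, [] => U
  | U, a :: w => stepWord tr (stepSet tr U a) w

/-- `U↓`: some state in `U` accepts. -/
def accSet {X : Type} (acc : X → Prop) (U : Set X) : Prop := ∃ x ∈ U, acc x

/-- Language equivalence of determinised state sets. -/
def langEq {A X : Type} (tr : X → A → X → Prop) (acc : X → Prop)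
    (U U' : Set X) : Prop :=
  ∀ w : List A, accSet acc (stepWord tr U w) ↔ accSet acc (stepWord tr U' w)


theorem imgStep {A X Y : Type} (trX : X → A → X → Prop) (trY : Y → A → Y → Prop)
    (f : X → Y → Prop)
    (h1 : ∀ (x : X) (y' : Y) (a : A),
      (∃ y, f x y ∧ trY y a y') ↔ (∃ x', f x' y' ∧ trX x a x'))
    (U : Set X) (a : A) :
    stepSet trY {y | ∃ x ∈ U, f x y} a = {y | ∃ x ∈ stepSet trX U a, f x y} := by
  ext y'
  constructor
  · rintro ⟨y, ⟨x, hxU, hf⟩, hty⟩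
    obtain ⟨x', hfx', htx⟩ := (h1 x y' a).mp ⟨y, hf, hty⟩
    exact ⟨x', ⟨x, hxU, htx⟩, hfx'⟩
  · rintro ⟨x', ⟨x, hxU, htx⟩, hfx'⟩
    obtain ⟨y, hf, hty⟩ := (h1 x y' a).mpr ⟨x', hfx', htx⟩
    exact ⟨y, ⟨x, hxU, hf⟩, hty⟩

theorem imgWord {A X Y : Type} (trX : X → A → X → Prop) (trY : Y → A → Y → Prop)
    (f : X → Y → Prop)
    (h1 : ∀ (x : X) (y' : Y) (a : A),
      (∃ y, f x y ∧ trY y a y') ↔ (∃ x', f x' y' ∧ trX x a x')) :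
    ∀ (w : List A) (U : Set X),
    stepWord trY {y | ∃ x ∈ U, f x y} w = {y | ∃ x ∈ stepWord trX U w, f x y}
  | [], U => rfl
  | a :: w, U => by
    show stepWord trY (stepSet trY _ a) w = _
    rw [imgStep trX trY f h1, imgWord trX trY f h1 w]
    rfl

theorem accImg {X Y : Type} (accX : X → Prop) (accY : Y → Prop) (f : X → Y → Prop)
    (h2 : ∀ x : X, accX x ↔ ∃ y, f x y ∧ accY y) (U : Set X) :
    accSet accX U ↔ accSet accY {y | ∃ x ∈ U, f x y} := by
  constructor
  · rintro ⟨x, hxU, hax⟩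
    obtain ⟨y, hf, hay⟩ := (h2 x).mp hax
    exact ⟨y, ⟨x, hxU, hf⟩, hay⟩
  · rintro ⟨y, ⟨x, hxU, hf⟩, hay⟩
    exact ⟨x, hxU, (h2 x).mpr ⟨y, hf, hay⟩⟩

/-- A relation `f ⊆ X × Y` satisfying the two transfer properties of a
coalgebra-homomorphism relation reflects and preserves language equivalence of
determinised state sets: `U ≃_X U' ↔ f[U] ≃_Y f[U']`. -/
theorem stmt10 {A X Y : Type}
    (trX : X → A → X → Prop) (accX : X → Prop)
    (trY : Y → A → Y → Prop) (accY : Y → Prop)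
    (f : X → Y → Prop)
    (h1 : ∀ (x : X) (y' : Y) (a : A),
      (∃ y, f x y ∧ trY y a y') ↔ (∃ x', f x' y' ∧ trX x a x'))
    (h2 : ∀ x : X, accX x ↔ ∃ y, f x y ∧ accY y) :
    ∀ U U' : Set X,
      langEq trX accX U U' ↔
        langEq trY accY {y | ∃ x ∈ U, f x y} {y | ∃ x ∈ U', f x y} := by
  intro U U'
  constructor
  · intro h w
    rw [imgWord trX trY f h1, imgWord trX trY f h1,
      ← accImg accX accY f h2, ← accImg accX accY f h2]
    exact h w
  · intro h w
    have := h w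
    rw [imgWord trX trY f h1, imgWord trX trY f h1,
      ← accImg accX accY f h2, ← accImg accX accY f h2] at this
    exact this
end
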